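/- Let H be a finite-dimensional Hilbert space, ρ a density matrix on H, and A a Hermitian matrix on H with 0 ≤ A ≤ I. Then ‖ρ − √A ρ √A‖₁ ≤ 2·√(Tr(ρ(I − A))). -/

import Mathlib

/-!
Put `B = √A` and split `ρ - BρB = ρ(1 - B) + (1 - B)ρB`. The trace norm of the Hermitian matrix
`ρ - BρB` is `Re Tr(W(ρ - BρB))` for the unitary `W = sign(ρ - BρB)`, and Cauchy–Schwarz for the
semi-inner product `⟪X, Y⟫ = Tr(YρXᴴ)` bounds each of the two resulting terms by
`√Tr(ρ(1 - B)²) ≤ √Tr(ρ(1 - A))`; the last step is `(1 - √x)² ≤ 1 - x` on the spectrum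
`[0, 1]` of `A`.
-/

open scoped ComplexOrder

/-- The square root of a positive semidefinite matrix (as defined in the older Mathlib). -/
noncomputable def Matrix.PosSemidef.sqrt {n : Type*} [Fintype n] [DecidableEq n] {𝕜 : Type*} [RCLike 𝕜]
    {A : Matrix n n 𝕜} (hA : A.PosSemidef) : Matrix n n 𝕜 :=
  (hA.1.eigenvectorUnitary : Matrix n n 𝕜) * Matrix.diagonal ((↑) ∘ (Real.sqrt ·) ∘ hA.1.eigenvalues) *
    (star hA.1.eigenvectorUnitary : Matrix n n 𝕜)

/-- The trace norm `Tr √(AᴴA)` of a complex square matrix. -/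
noncomputable def traceNorm {n : Type*} [Fintype n] [DecidableEq n] (A : Matrix n n ℂ) : ℝ :=
  ((Matrix.posSemidef_conjTranspose_mul_self A).sqrt.trace).re

open scoped MatrixOrder

namespace Matrix

variable {n 𝕜 : Type*} [Fintype n] [DecidableEq n] [RCLike 𝕜]

lemma PosSemidef.sqrt_eq_cfcSqrt {A : Matrix n n 𝕜} (hA : A.PosSemidef) :
    hA.sqrt = CFC.sqrt A := by
  rw [CFC.sqrt_eq_real_sqrt A hA.nonneg, cfcₙ_eq_cfc, hA.1.cfc_eq, IsHermitian.cfc,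
    Unitary.conjStarAlgAut_apply]
  rfl

lemma IsHermitian.exists_mul_eq_cfcAbs {M : Matrix n n 𝕜} (hM : M.IsHermitian) :
    ∃ W : Matrix n n 𝕜, star W * W = 1 ∧ CFC.abs M = W * M := by
  let s : ℝ → ℝ := fun x => if 0 ≤ x then 1 else -1
  have hs : ContinuousOn s (spectrum ℝ M) := M.finite_real_spectrum.continuousOn _
  refine ⟨cfc s M, ?_, ?_⟩
  · rw [← cfc_star, ← cfc_mul _ _ M, ← cfc_one ℝ M]
    refine cfc_congr fun x _ => ?_
    by_cases hx : 0 ≤ x <;> simp [s, hx]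
  · rw [CFC.abs_eq_cfc_norm M hM.isSelfAdjoint]
    have hmul : cfc s M * M = cfc (fun x => s x * x) M := by
      rw [cfc_mul s (fun x => x) M, cfc_id' ℝ M]
    rw [hmul]
    refine cfc_congr fun x _ => ?_
    by_cases hx : 0 ≤ x
    · simp [s, hx, abs_of_nonneg hx]
    · simp [s, hx, abs_of_neg (not_le.mp hx)]

lemma re_trace_mul_le_of_le {ρ X Y : Matrix n n 𝕜} (hρ : 0 ≤ ρ) (hXY : X ≤ Y) :
    RCLike.re (ρ * X).trace ≤ RCLike.re (ρ * Y).trace := by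
  have htrace : ∀ Z : Matrix n n 𝕜, (ρ * Z).trace = (star (CFC.sqrt ρ) * Z * CFC.sqrt ρ).trace := by
    intro Z
    rw [(CFC.sqrt_nonneg ρ).star_eq, trace_mul_cycle, CFC.sqrt_mul_sqrt_self ρ]
  rw [htrace, htrace]
  exact RCLike.re_le_re (OrderHomClass.mono (tracePositiveLinearMap n ℝ 𝕜)
    (star_left_conjugate_le_conjugate hXY _))

omit [DecidableEq n] in
lemma re_trace_mul_mul_le {ρ : Matrix n n 𝕜} (hρ : ρ.PosSemidef) (P Q : Matrix n n 𝕜) :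
    RCLike.re (P * ρ * Q).trace ≤
      √(RCLike.re (P * ρ * star P).trace) * √(RCLike.re (star Q * ρ * Q).trace) := by
  let := ρ.toMatrixSeminormedAddCommGroup hρ
  let := ρ.toMatrixInnerProductSpace hρ
  have h : RCLike.re (P * ρ * star (star Q)).trace ≤
      √(RCLike.re (star Q * ρ * star (star Q)).trace) * √(RCLike.re (P * ρ * star P).trace) :=
    re_inner_le_norm (star Q) P
  rwa [star_star, mul_comm] at h

lemma re_trace_unitary_mul_mul_le {ρ W : Matrix n n 𝕜} (hρ : ρ.PosSemidef) (hW : star W * W = 1)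
    (X Y : Matrix n n 𝕜) :
    RCLike.re (W * (X * ρ * Y)).trace ≤
      √(RCLike.re (X * ρ * star X).trace) * √(RCLike.re (star Y * ρ * Y).trace) := by
  have hconj : (W * X * ρ * star (W * X)).trace = (X * ρ * star X).trace := by
    rw [star_mul, ← mul_assoc, trace_mul_comm]
    simp only [← mul_assoc, hW, one_mul]
  have h := re_trace_mul_mul_le hρ (W * X) Y
  rw [hconj] at h
  simpa only [mul_assoc] using h

lemma one_sub_cfcSqrt_mul_self_le {A : Matrix n n 𝕜} (hA₀ : 0 ≤ A) (hA₁ : A ≤ 1) :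
    (1 - CFC.sqrt A) * (1 - CFC.sqrt A) ≤ 1 - A := by
  have hspec : ∀ x ∈ spectrum ℝ A, 0 ≤ x ∧ x ≤ 1 := fun x hx =>
    ⟨spectrum_nonneg_of_nonneg hA₀ hx, (CFC.le_one_iff A).mp hA₁ x hx⟩
  calc (1 - CFC.sqrt A) * (1 - CFC.sqrt A) = cfc (fun x => (1 - √x) * (1 - √x)) A := by
        rw [cfc_mul .., cfc_sub .., cfc_const_one ℝ A, CFC.sqrt_eq_real_sqrt A, cfcₙ_eq_cfc]
    _ ≤ cfc (fun x => 1 - x) A := cfc_mono fun x hx => by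
        obtain ⟨hx₀, hx₁⟩ := hspec x hx
        nlinarith [Real.mul_self_sqrt hx₀, Real.sqrt_le_one.mpr hx₁, Real.sqrt_nonneg x]
    _ = 1 - A := by rw [cfc_sub .., cfc_const_one ℝ A, cfc_id' ℝ A]

end Matrix

lemma traceNorm_eq_re_trace_cfcAbs {n : Type*} [Fintype n] [DecidableEq n] (M : Matrix n n ℂ) :
    traceNorm M = (CFC.abs M).trace.re := by
  rw [traceNorm, M.posSemidef_conjTranspose_mul_self.sqrt_eq_cfcSqrt, CFC.abs,
    Matrix.star_eq_conjTranspose]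

open Matrix in
/-- The gentle measurement lemma (Winter; Ogawa–Nagaoka variant): for a density matrix `ρ`
and a Hermitian `A` with `0 ≤ A ≤ I`, `‖ρ − √A ρ √A‖₁ ≤ 2 √(Tr ρ(I − A))`. -/
theorem stmt1 {n : Type*} [Fintype n] [DecidableEq n]
    (ρ A : Matrix n n ℂ) (hρ : ρ.PosSemidef) (hρ1 : ρ.trace = 1)
    (hA : A.PosSemidef) (hA1 : (1 - A).PosSemidef) :
    traceNorm (ρ - hA.sqrt * ρ * hA.sqrt) ≤ 2 * Real.sqrt ((ρ * (1 - A)).trace.re) := by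
  have hA₁ : A ≤ 1 := le_iff.mpr hA1
  rw [hA.sqrt_eq_cfcSqrt]
  set B := CFC.sqrt A
  have hB : IsSelfAdjoint B := (CFC.sqrt_nonneg A).isSelfAdjoint
  have hB₁ : IsSelfAdjoint (1 - B) := IsSelfAdjoint.one _ |>.sub hB
  obtain ⟨W, hW, habs⟩ := IsHermitian.exists_mul_eq_cfcAbs
    (hρ.isHermitian.isSelfAdjoint.sub (hρ.isHermitian.isSelfAdjoint.conjugate_self hB))
  set t := (ρ * (1 - A)).trace.re
  have h₀ : √(RCLike.re (1 * ρ * star 1).trace) = 1 := by simp [hρ1]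
  have h₁ : √(RCLike.re ((1 - B) * ρ * (1 - B)).trace) ≤ √t := by
    refine Real.sqrt_le_sqrt ?_
    rw [trace_mul_cycle, trace_mul_comm]
    exact re_trace_mul_le_of_le hρ.nonneg (one_sub_cfcSqrt_mul_self_le hA.nonneg hA₁)
  have h₂ : √(RCLike.re (B * ρ * B).trace) ≤ 1 := by
    rw [Real.sqrt_le_one, trace_mul_cycle, trace_mul_comm,
      CFC.sqrt_mul_sqrt_self A hA.nonneg]
    simpa [hρ1] using re_trace_mul_le_of_le hρ.nonneg hA₁
  have hsplit : ρ - B * ρ * B = 1 * ρ * (1 - B) + (1 - B) * ρ * B := by noncomm_ring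
  rw [traceNorm_eq_re_trace_cfcAbs, habs, hsplit, mul_add, trace_add, Complex.add_re]
  calc _ ≤ √(RCLike.re (1 * ρ * star 1).trace) * √(RCLike.re (star (1 - B) * ρ * (1 - B)).trace)
        + √(RCLike.re ((1 - B) * ρ * star (1 - B)).trace) * √(RCLike.re (star B * ρ * B).trace) :=
        add_le_add (re_trace_unitary_mul_mul_le hρ hW _ _) (re_trace_unitary_mul_mul_le hρ hW _ _)
    _ ≤ 1 * √t + √t * 1 := by
        rw [h₀, hB.star_eq, hB₁.star_eq]
        gcongr
    _ = 2 * √t := by ring
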